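/- arXiv:2205.00401 — 2 statements merged into one kernel-verified Lean document; each statement's English description precedes it below -/
import Mathlib

section
/- Let V : [0,∞) → [0,∞) be a continuous decreasing function and n > 1 a real number. Then ∫₀^∞ V(t) t^{1/(n-1)} dt ≤ ((n-1)/n) (∫₀^∞ V(t)^{(n-1)/n} dt)^{n/(n-1)}. -/
open MeasureTheory Set Filter Topology

/-! Put `W = V ^ ((n-1)/n)` and `α = 1/(n-1)`, so that `V t * t ^ α = W t * (t * W t) ^ α`.
Since `W` is decreasing, `t * W t ≤ F t := ∫₀ᵗ W`, hence the integrand is at most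
`W * F ^ α = (F ^ (α+1) / (α+1))'`, whose integral over `(0, ∞)` is `F(∞) ^ (α+1) / (α+1)`. -/

theorem AntitoneOn.mul_le_intervalIntegral {W : ℝ → ℝ} (hW : AntitoneOn W (Ici 0)) {t : ℝ}
    (ht : 0 ≤ t) : t * W t ≤ ∫ s in 0..t, W s := by
  have hsub : uIcc 0 t ⊆ Ici 0 := by
    rw [uIcc_of_le ht]
    exact Icc_subset_Ici_self
  calc t * W t = ∫ _ in 0..t, W t := by simp
    _ ≤ ∫ s in 0..t, W s :=
      intervalIntegral.integral_mono_on ht intervalIntegrable_const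
        ((hW.mono hsub).intervalIntegrable) fun s hs => hW hs.1 ht hs.2

theorem lintegral_mul_rpow_intervalIntegral_eq {W : ℝ → ℝ} (hWc : Continuous W)
    (hW0 : ∀ t, 0 ≤ t → 0 ≤ W t) (hWi : IntegrableOn W (Ioi 0)) {α : ℝ} (hα : 0 ≤ α) :
    ∫⁻ t in Ioi 0, ENNReal.ofReal (W t * (∫ s in 0..t, W s) ^ α) =
      ENNReal.ofReal ((∫ t in Ioi 0, W t) ^ (α + 1) / (α + 1)) := by
  set F : ℝ → ℝ := fun t => ∫ s in 0..t, W s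
  have hF : ∀ t, HasDerivAt F (W t) t := fun t =>
    intervalIntegral.integral_hasDerivAt_right (hWc.intervalIntegrable _ _)
      hWc.aestronglyMeasurable.stronglyMeasurableAtFilter hWc.continuousAt
  have hF0 : ∀ t, 0 ≤ t → 0 ≤ F t := fun t ht =>
    intervalIntegral.integral_nonneg ht fun s hs => hW0 s hs.1
  have hα1 : 0 < α + 1 := by linarith
  have hG : ∀ t ∈ Ici (0 : ℝ), HasDerivAt (fun t => F t ^ (α + 1) / (α + 1))
      (W t * F t ^ α) t := fun t _ => by
    refine (((hF t).rpow_const (Or.inr (by linarith))).div_const (α + 1)).congr_deriv ?_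
    rw [add_sub_cancel_right]
    field_simp
  have hG_lim : Tendsto (fun t => F t ^ (α + 1) / (α + 1)) atTop
      (𝓝 ((∫ t in Ioi 0, W t) ^ (α + 1) / (α + 1))) :=
    (((Real.continuous_rpow_const hα1.le).tendsto _).comp
      (intervalIntegral_tendsto_integral_Ioi 0 hWi tendsto_id)).div_const _
  have hG'_nonneg : ∀ t ∈ Ioi (0 : ℝ), 0 ≤ W t * F t ^ α := fun t ht =>
    mul_nonneg (hW0 t (le_of_lt ht)) (Real.rpow_nonneg (hF0 t (le_of_lt ht)) α)
  rw [← ofReal_integral_eq_lintegral_ofReal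
      (integrableOn_Ioi_deriv_of_nonneg' hG hG'_nonneg hG_lim)
      ((ae_restrict_iff' measurableSet_Ioi).2 (ae_of_all _ hG'_nonneg)),
    integral_Ioi_of_hasDerivAt_of_nonneg' hG hG'_nonneg hG_lim]
  simp [F, Real.zero_rpow hα1.ne']

theorem AntitoneOn.lintegral_mul_rpow_mul_self_le {W : ℝ → ℝ} (hWc : Continuous W)
    (hW : AntitoneOn W (Ici 0)) (hW0 : ∀ t, 0 ≤ t → 0 ≤ W t) {α : ℝ} (hα : 0 ≤ α) :
    ∫⁻ t in Ioi 0, ENNReal.ofReal (W t * (t * W t) ^ α) ≤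
      ENNReal.ofReal (1 / (α + 1)) * (∫⁻ t in Ioi 0, ENNReal.ofReal (W t)) ^ (α + 1) := by
  have hα1 : 0 < α + 1 := by linarith
  have hW0_ae : 0 ≤ᵐ[volume.restrict (Ioi 0)] W :=
    (ae_restrict_iff' measurableSet_Ioi).2 (ae_of_all _ fun t ht => hW0 t (le_of_lt ht))
  rcases eq_or_ne (∫⁻ t in Ioi 0, ENNReal.ofReal (W t)) ⊤ with hI | hI
  · rw [hI, ENNReal.top_rpow_of_pos hα1, ENNReal.mul_top (by simpa using hα1)]
    exact le_top
  have hWi : IntegrableOn W (Ioi 0) :=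
    (lintegral_ofReal_ne_top_iff_integrable hWc.aestronglyMeasurable hW0_ae).1 hI
  rw [← ofReal_integral_eq_lintegral_ofReal hWi hW0_ae,
    ENNReal.ofReal_rpow_of_nonneg (integral_nonneg_of_ae hW0_ae) hα1.le,
    ← ENNReal.ofReal_mul (by positivity), one_div_mul_eq_div,
    ← lintegral_mul_rpow_intervalIntegral_eq hWc hW0 hWi hα]
  refine setLIntegral_mono' measurableSet_Ioi fun t ht => ENNReal.ofReal_le_ofReal ?_
  have ht : 0 ≤ t := le_of_lt ht
  gcongr
  · exact hW0 t ht
  · exact mul_nonneg ht (hW0 t ht)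
  · exact hW.mul_le_intervalIntegral ht

/-- **Hardy–Littlewood–Pólya inequality.** If `V : [0,∞) → [0,∞)` is continuous and
decreasing and `n > 1`, then
`∫₀^∞ V(t) t^{1/(n-1)} dt ≤ ((n-1)/n) (∫₀^∞ V(t)^{(n-1)/n} dt)^{n/(n-1)}`. -/
theorem stmt_0 (V : ℝ → ℝ) (hVc : Continuous V) (hVanti : AntitoneOn V (Set.Ici 0))
    (hVnn : ∀ t, 0 ≤ t → 0 ≤ V t) (n : ℝ) (hn : 1 < n) :
    ∫⁻ t in Set.Ioi (0 : ℝ), ENNReal.ofReal (V t * t ^ (1 / (n - 1))) ≤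
      ENNReal.ofReal ((n - 1) / n) *
        (∫⁻ t in Set.Ioi (0 : ℝ), ENNReal.ofReal (V t ^ ((n - 1) / n))) ^ (n / (n - 1)) := by
  have hn1 : 0 < n - 1 := by linarith
  set p := (n - 1) / n
  set α := 1 / (n - 1)
  have hp : 0 < p := by positivity
  have hα1 : α + 1 = n / (n - 1) := by simp only [α]; field_simp; ring
  have hpα : p + p * α = 1 := by simp only [p, α]; field_simp; ring
  have key := AntitoneOn.lintegral_mul_rpow_mul_self_le (W := fun t => V t ^ p) (α := α)
    (hVc.rpow_const fun _ => Or.inr hp.le)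
    (fun s hs t ht hst => Real.rpow_le_rpow (hVnn t ht) (hVanti hs ht hst) hp.le)
    (fun t ht => Real.rpow_nonneg (hVnn t ht) p) (by positivity)
  rw [hα1, one_div_div] at key
  refine le_of_eq_of_le (setLIntegral_congr_fun measurableSet_Ioi fun t ht => ?_) key
  have ht : 0 ≤ t := le_of_lt ht
  rw [Real.mul_rpow ht (Real.rpow_nonneg (hVnn t ht) p), ← Real.rpow_mul (hVnn t ht),
    mul_left_comm, ← Real.rpow_add' (hVnn t ht) (by rw [hpα]; norm_num), hpα, Real.rpow_one,
    mul_comm]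
end

section
/- Let S ⊂ B̄₁ ⊂ ℝ^d be compact with H^{d-p}(S) = 0 for some 1 ≤ p < d, and let f ∈ W^{1,p}(B₁) ∩ L^∞(B₁). Then there exists a sequence of Lipschitz cutoff functions η_k : ℝ^d → [0,1] with η_k ≡ 0 in a neighborhood of S, η_k ≡ 1 outside a 2ε_k-neighborhood of S with ε_k → 0, and such that f η_k → f in W^{1,p}(B₁). In particular, sets of zero (d-p)-Hausdorff measure are removable for W^{1,p} ∩ L^∞ approximation. -/
/-!
Since `S` is compact with `μH[d - p] S = 0`, it is covered by finitely many balls `B(yᵢ, sᵢ)`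
with `∑ sᵢ ^ (d - p)` as small as we like. Let `η` be the minimum of `1` and of the ramps that
vanish on `B(yᵢ, sᵢ)` and equal `1` off `B(yᵢ, 2 sᵢ)`. It is Lipschitz, hence differentiable
almost everywhere, and where `η x < 1` it lies below a ramp attaining the minimum at `x`, so the
one-sided bound `η z ≤ η x + ‖z - x‖ / sᵢ` gives `‖Dη x‖ ≤ 1 / sᵢ` with `x ∈ B(yᵢ, 2 sᵢ)`.
Thus `‖Dη‖ ^ p ≤ ∑ᵢ sᵢ ^ (-p) 1_{B(yᵢ, 2 sᵢ)}`, whose integral is `2 ^ d |B₁| ∑ sᵢ ^ (d - p)`.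
By the Leibniz rule the `W^{1,p}` error of `f η` is at most a multiple of `C ^ p` times this
integral plus the integral of `‖Df‖ ^ p` over the doubled balls, whose measure tends to zero.
-/

open MeasureTheory Metric Set Filter Topology Module
open scoped ENNReal NNReal

noncomputable section

section Covering

variable {X : Type*} [MeasurableSpace X] {q : ℝ} {S : Set X}

theorem exists_cover_tsum_ediam_rpow_lt [EMetricSpace X] [BorelSpace X] (hq : 0 < q)
    (hS : μH[q] S = 0) {e : ℝ≥0∞} (he : 0 < e) :
    ∃ u : ℕ → Set X, S ⊆ ⋃ n, u n ∧ ∑' n, ediam (u n) ^ q < e := by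
  rw [Measure.hausdorffMeasure_apply, ENNReal.iSup_eq_zero] at hS
  rw [← ENNReal.iSup_eq_zero.1 (hS 1) one_pos] at he
  obtain ⟨u, hu⟩ := iInf_lt_iff.1 he
  obtain ⟨hSu, hu⟩ := iInf_lt_iff.1 hu
  obtain ⟨-, hu⟩ := iInf_lt_iff.1 hu
  refine ⟨u, hSu, lt_of_le_of_lt (ENNReal.tsum_le_tsum fun n => ?_) hu⟩
  rcases (u n).eq_empty_or_nonempty with hn | hn
  · simp [hn, ENNReal.zero_rpow_of_pos hq]
  · exact le_iSup_of_le hn le_rfl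

variable [MetricSpace X] [BorelSpace X]

theorem exists_ball_cover_forall_sum_rpow_le (hq : 0 < q) (hSne : S.Nonempty)
    (hS : μH[q] S = 0) {δ : ℝ} (hδ : 0 < δ) :
    ∃ (c : ℕ → X) (r : ℕ → ℝ), (∀ n, c n ∈ S) ∧ (∀ n, 0 < r n) ∧
      S ⊆ ⋃ n, ball (c n) (r n) ∧ ∀ F : Finset ℕ, ∑ n ∈ F, r n ^ q ≤ δ := by
  classical
  obtain ⟨x₀, hx₀⟩ := hSne
  obtain ⟨u, hSu, hu⟩ :=
    exists_cover_tsum_ediam_rpow_lt hq hS (ENNReal.ofReal_pos.2 (half_pos hδ))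
  obtain ⟨τ, hτ, hτsum⟩ := (countable_univ (α := ℕ)).exists_pos_forall_sum_le (half_pos hδ)
  have hfin : ∀ n, ediam (u n) ≠ ⊤ := fun n h =>
    ENNReal.ne_top_of_tsum_ne_top hu.ne_top n (by rw [h, ENNReal.top_rpow_of_pos hq])
  -- A radius above `diam (u n)`, with `r n ^ q` exceeding `diam (u n) ^ q` by the summable `τ n`.
  set r : ℕ → ℝ := fun n => (diam (u n) ^ q + τ n) ^ q⁻¹
  have hr_rpow : ∀ n, r n ^ q = diam (u n) ^ q + τ n := fun n =>
    Real.rpow_inv_rpow (by positivity [hτ n]) hq.ne'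
  have hr : ∀ n, diam (u n) < r n := fun n => by
    rw [← Real.rpow_lt_rpow_iff diam_nonneg (by positivity [hτ n]) hq, hr_rpow]
    linarith [hτ n]
  set c : ℕ → X := fun n => if h : (u n ∩ S).Nonempty then h.some else x₀
  refine ⟨c, r, fun n => ?_, fun n => diam_nonneg.trans_lt (hr n), fun x hx => ?_, fun F => ?_⟩
  · by_cases h : (u n ∩ S).Nonempty
    · simpa [c, h] using h.some_mem.2
    · simpa [c, h] using hx₀
  · obtain ⟨n, hxn⟩ := mem_iUnion.1 (hSu hx)
    have h : (u n ∩ S).Nonempty := ⟨x, hxn, hx⟩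
    have hcn : c n ∈ u n := by simpa [c, h] using h.some_mem.1
    exact mem_iUnion.2 ⟨n, (dist_le_diam_of_mem (isBounded_iff_ediam_ne_top.2 (hfin n)) hxn
      hcn).trans_lt (hr n)⟩
  have hdiam : ∑ n ∈ F, diam (u n) ^ q ≤ δ / 2 := by
    rw [← ENNReal.ofReal_le_ofReal_iff (half_pos hδ).le,
      ENNReal.ofReal_sum_of_nonneg fun n _ => by positivity]
    calc ∑ n ∈ F, ENNReal.ofReal (diam (u n) ^ q) = ∑ n ∈ F, ediam (u n) ^ q := by
          refine Finset.sum_congr rfl fun n _ => ?_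
          rw [← ENNReal.ofReal_rpow_of_nonneg diam_nonneg hq.le, diam,
            ENNReal.ofReal_toReal (hfin n)]
      _ ≤ ENNReal.ofReal (δ / 2) := (ENNReal.sum_le_tsum F).trans hu.le
  calc ∑ n ∈ F, r n ^ q = ∑ n ∈ F, diam (u n) ^ q + ∑ n ∈ F, τ n := by
        simp_rw [hr_rpow, Finset.sum_add_distrib]
    _ ≤ δ / 2 + δ / 2 := add_le_add hdiam (hτsum F (subset_univ _))
    _ = δ := add_halves δ

theorem exists_finset_ball_cover_sum_rpow_le (hq : 0 < q) (hSc : IsCompact S)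
    (hS : μH[q] S = 0) {δ : ℝ} (hδ : 0 < δ) :
    ∃ B : Finset (X × ℝ), (∀ b ∈ B, b.1 ∈ S) ∧ (∀ b ∈ B, 0 < b.2) ∧
      S ⊆ ⋃ b ∈ B, ball b.1 b.2 ∧ ∑ b ∈ B, b.2 ^ q ≤ δ := by
  classical
  rcases S.eq_empty_or_nonempty with rfl | hSne
  · exact ⟨∅, by simp, by simp, by simp, by simp [hδ.le]⟩
  obtain ⟨c, r, hcS, hr, hcov, hsum⟩ := exists_ball_cover_forall_sum_rpow_le hq hSne hS hδ
  obtain ⟨F, hF⟩ := hSc.elim_finite_subcover _ (fun n => isOpen_ball) hcov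
  refine ⟨F.image fun n => (c n, r n), by simpa using fun n _ => hcS n,
    by simpa using fun n _ => hr n, by simpa using hF, ?_⟩
  refine (Finset.sum_image_le_of_nonneg fun b hb => ?_).trans (hsum F)
  obtain ⟨n, -, rfl⟩ := Finset.mem_image.1 hb
  exact Real.rpow_nonneg (hr n).le q

end Covering

section Cutoff

variable {X : Type*} [PseudoMetricSpace X]

def ballRamp (c : X) (r : ℝ) (x : X) : ℝ := max 0 (dist x c / r - 1)

def coverCutoff (B : Finset (X × ℝ)) (x : X) : ℝ :=
  B.fold min 1 fun b => ballRamp b.1 b.2 x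

def coverWeight (B : Finset (X × ℝ)) (p : ℝ) (x : X) : ℝ :=
  ∑ b ∈ B, (ball b.1 (2 * b.2)).indicator (fun _ => b.2 ^ (-p)) x

theorem lipschitzWith_ballRamp (c : X) (r : ℝ) : LipschitzWith ‖r⁻¹‖₊ (ballRamp c r) := by
  refine LipschitzWith.const_max (LipschitzWith.of_dist_le_mul fun x y => ?_) 0
  rw [Real.dist_eq, sub_sub_sub_cancel_right, ← sub_div, div_eq_mul_inv, abs_mul, mul_comm,
    coe_nnnorm, Real.norm_eq_abs]
  gcongr
  exact abs_dist_sub_le x y c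

theorem ballRamp_eq_zero {c x : X} {r : ℝ} (hr : 0 < r) (hx : dist x c ≤ r) :
    ballRamp c r x = 0 :=
  max_eq_left (sub_nonpos.2 ((div_le_one hr).2 hx))

theorem one_le_ballRamp {c x : X} {r : ℝ} (hr : 0 < r) (hx : 2 * r ≤ dist x c) :
    1 ≤ ballRamp c r x := by
  refine le_max_of_le_right ?_
  rw [le_sub_iff_add_le, le_div_iff₀ hr]
  linarith

variable {B : Finset (X × ℝ)} {p : ℝ}

theorem coverCutoff_mem_Icc (x : X) : coverCutoff B x ∈ Icc 0 1 :=
  ⟨(Finset.le_fold_min _).2 ⟨zero_le_one, fun _ _ => le_max_left _ _⟩,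
    (Finset.fold_min_le _).2 (Or.inl le_rfl)⟩

theorem coverCutoff_eq_zero {b : X × ℝ} (hb : b ∈ B) (hr : 0 < b.2) {x : X}
    (hx : dist x b.1 ≤ b.2) : coverCutoff B x = 0 :=
  le_antisymm ((Finset.fold_min_le _).2 (Or.inr ⟨b, hb, (ballRamp_eq_zero hr hx).le⟩))
    (coverCutoff_mem_Icc x).1

theorem coverCutoff_eq_one (hr : ∀ b ∈ B, 0 < b.2) {x : X}
    (hx : x ∉ ⋃ b ∈ B, ball b.1 (2 * b.2)) : coverCutoff B x = 1 := by
  simp only [mem_iUnion, mem_ball, not_exists, not_lt] at hx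
  exact le_antisymm (coverCutoff_mem_Icc x).2
    ((Finset.le_fold_min _).2 ⟨le_rfl, fun b hb => one_le_ballRamp (hr b hb) (hx b hb)⟩)

theorem lipschitzWith_coverCutoff (B : Finset (X × ℝ)) :
    LipschitzWith (B.sup fun b => ‖b.2⁻¹‖₊) (coverCutoff B) := by
  classical
  induction B using Finset.induction_on with
  | empty => exact LipschitzWith.const' 1
  | insert b B hb ih =>
    have h : coverCutoff (insert b B) = fun x => min (ballRamp b.1 b.2 x) (coverCutoff B x) :=
      funext fun x => Finset.fold_insert hb
    rw [h, Finset.sup_insert]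
    exact (lipschitzWith_ballRamp b.1 b.2).min ih

theorem coverCutoff_le_add_dist (hr : ∀ b ∈ B, 0 < b.2) {x : X} (hx : coverCutoff B x < 1) :
    ∃ b ∈ B, dist x b.1 < 2 * b.2 ∧
      ∀ z, coverCutoff B z ≤ coverCutoff B x + b.2⁻¹ * dist z x := by
  obtain ⟨b, hb, hbx⟩ := ((Finset.fold_min_le _).1 le_rfl).resolve_left hx.not_ge
  refine ⟨b, hb, ?_, fun z => ?_⟩
  · by_contra! h
    exact ((one_le_ballRamp (hr b hb) h).trans hbx).not_gt hx
  · have hlip := (lipschitzWith_ballRamp b.1 b.2).dist_le_mul z x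
    rw [Real.dist_eq, coe_nnnorm, Real.norm_eq_abs, abs_of_pos (inv_pos.2 (hr b hb))] at hlip
    calc coverCutoff B z ≤ ballRamp b.1 b.2 z := (Finset.fold_min_le _).2 (Or.inr ⟨b, hb, le_rfl⟩)
      _ ≤ ballRamp b.1 b.2 x + b.2⁻¹ * dist z x := by linarith [(abs_le.1 hlip).2]
      _ ≤ coverCutoff B x + b.2⁻¹ * dist z x := add_le_add_left hbx _

theorem coverWeight_nonneg (hr : ∀ b ∈ B, 0 < b.2) (x : X) : 0 ≤ coverWeight B p x :=
  Finset.sum_nonneg fun b hb =>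
    indicator_nonneg (fun _ _ => (Real.rpow_pos_of_pos (hr b hb) _).le) x

theorem rpow_le_coverWeight {b : X × ℝ} (hb : b ∈ B) (hr : ∀ b ∈ B, 0 < b.2) {x : X}
    (hx : dist x b.1 < 2 * b.2) : b.2 ^ (-p) ≤ coverWeight B p x := by
  have h := Finset.single_le_sum (f := fun b => (ball b.1 (2 * b.2)).indicator
    (fun _ => b.2 ^ (-p)) x) (fun b hb => indicator_nonneg
      (fun _ _ => (Real.rpow_pos_of_pos (hr b hb) _).le) x) hb
  rwa [indicator_of_mem (mem_ball.2 hx)] at h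

theorem indicator_le_coverWeight (hp : 0 ≤ p) (hr : ∀ b ∈ B, 0 < b.2) (hr1 : ∀ b ∈ B, b.2 ≤ 1)
    (x : X) : (⋃ b ∈ B, ball b.1 (2 * b.2)).indicator 1 x ≤ coverWeight B p x := by
  by_cases hx : x ∈ ⋃ b ∈ B, ball b.1 (2 * b.2)
  · obtain ⟨b, hb, hxb⟩ := mem_iUnion₂.1 hx
    rw [indicator_of_mem hx, Pi.one_apply]
    exact (Real.one_le_rpow_of_pos_of_le_one_of_nonpos (hr b hb) (hr1 b hb)
      (neg_nonpos.2 hp)).trans (rpow_le_coverWeight hb hr hxb)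
  · rw [indicator_of_notMem hx]
    exact coverWeight_nonneg hr x

theorem one_sub_coverCutoff_rpow_le (hp : 0 < p) (hr : ∀ b ∈ B, 0 < b.2) (x : X) :
    (1 - coverCutoff B x) ^ p ≤ (⋃ b ∈ B, ball b.1 (2 * b.2)).indicator 1 x := by
  have hη := coverCutoff_mem_Icc (B := B) x
  by_cases hx : x ∈ ⋃ b ∈ B, ball b.1 (2 * b.2)
  · rw [indicator_of_mem hx, Pi.one_apply]
    exact Real.rpow_le_one (by linarith [hη.2]) (by linarith [hη.1]) hp.le
  · rw [indicator_of_notMem hx, coverCutoff_eq_one hr hx, sub_self, Real.zero_rpow hp.ne']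

end Cutoff

theorem norm_fderiv_le_of_forall_le_add {E : Type*} [NormedAddCommGroup E] [NormedSpace ℝ E]
    {f : E → ℝ} {x : E} {K : ℝ} (hK : 0 ≤ K) (h : ∀ z, f z ≤ f x + K * ‖z - x‖) :
    ‖fderiv ℝ f x‖ ≤ K := by
  by_cases hf : DifferentiableAt ℝ f x
  swap
  · simpa [fderiv_zero_of_not_differentiableAt hf] using hK
  have hdir : ∀ v, fderiv ℝ f x v ≤ K * ‖v‖ := by
    intro v
    have hline : HasDerivAt (fun s : ℝ => f (x + s • v)) (fderiv ℝ f x v) 0 := by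
      have hf' : HasFDerivAt f (fderiv ℝ f x) (x + (0 : ℝ) • v) := by simpa using hf.hasFDerivAt
      have := hf'.comp_hasDerivAt (0 : ℝ) (((hasDerivAt_id' (0 : ℝ)).smul_const v).const_add x)
      rwa [one_smul] at this
    refine le_of_tendsto hline.tendsto_slope_zero_right ?_
    filter_upwards [self_mem_nhdsWithin] with s (hs : 0 < s)
    have := h (x + s • v)
    rw [add_sub_cancel_left, norm_smul, Real.norm_of_nonneg hs.le] at this
    rw [zero_add, zero_smul, add_zero, smul_eq_mul, inv_mul_le_iff₀ hs]
    linarith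
  refine ContinuousLinearMap.opNorm_le_bound _ hK fun v => abs_le.2 ⟨?_, hdir v⟩
  have := hdir (-v)
  rw [map_neg, norm_neg] at this
  linarith

section Weight

variable {E : Type*} [NormedAddCommGroup E] [NormedSpace ℝ E] {B : Finset (E × ℝ)} {p : ℝ}

theorem norm_fderiv_coverCutoff_rpow_le (hp : 0 < p) (hr : ∀ b ∈ B, 0 < b.2) (x : E) :
    ‖fderiv ℝ (coverCutoff B) x‖ ^ p ≤ coverWeight B p x := by
  rcases (coverCutoff_mem_Icc (B := B) x).2.lt_or_eq with hx | hx
  · obtain ⟨b, hb, hxb, hle⟩ := coverCutoff_le_add_dist hr hx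
    have hD : ‖fderiv ℝ (coverCutoff B) x‖ ≤ b.2⁻¹ :=
      norm_fderiv_le_of_forall_le_add (inv_pos.2 (hr b hb)).le fun z => by
        simpa only [dist_eq_norm] using hle z
    calc ‖fderiv ℝ (coverCutoff B) x‖ ^ p ≤ b.2⁻¹ ^ p := by gcongr
      _ = b.2 ^ (-p) := by rw [Real.inv_rpow (hr b hb).le, Real.rpow_neg (hr b hb).le]
      _ ≤ coverWeight B p x := rpow_le_coverWeight hb hr hxb
  · have hD : ‖fderiv ℝ (coverCutoff B) x‖ ≤ 0 :=
      norm_fderiv_le_of_forall_le_add le_rfl fun z => by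
        rw [hx, zero_mul, add_zero]
        exact (coverCutoff_mem_Icc z).2
    rw [norm_le_zero_iff.1 hD, norm_zero, Real.zero_rpow hp.ne']
    exact coverWeight_nonneg hr x

variable [FiniteDimensional ℝ E] [MeasurableSpace E] [BorelSpace E] (μ : Measure E)
  [μ.IsAddHaarMeasure]

theorem integrable_coverWeight : Integrable (coverWeight B p) μ :=
  integrable_finsetSum B fun _ _ =>
    (integrable_indicator_iff measurableSet_ball).2 (integrableOn_const measure_ball_lt_top.ne)

theorem integral_coverWeight (hr : ∀ b ∈ B, 0 < b.2) :
    ∫ x, coverWeight B p x ∂μ =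
      2 ^ finrank ℝ E * μ.real (ball 0 1) * ∑ b ∈ B, b.2 ^ ((finrank ℝ E : ℝ) - p) := by
  unfold coverWeight
  rw [integral_finsetSum _ fun b _ =>
    (integrable_indicator_iff measurableSet_ball).2 (integrableOn_const measure_ball_lt_top.ne),
    Finset.mul_sum]
  refine Finset.sum_congr rfl fun b hb => ?_
  have hrb := hr b hb
  rw [integral_indicator_const _ measurableSet_ball, smul_eq_mul, measureReal_def,
    Measure.addHaar_ball_of_pos μ _ (by positivity), ENNReal.toReal_mul,
    ENNReal.toReal_ofReal (by positivity), ← measureReal_def, Real.rpow_sub hrb,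
    Real.rpow_neg hrb.le, Real.rpow_natCast, mul_pow]
  field_simp

theorem measure_iUnion_ball_le_integral_coverWeight (hp : 0 ≤ p) (hr : ∀ b ∈ B, 0 < b.2)
    (hr1 : ∀ b ∈ B, b.2 ≤ 1) :
    μ (⋃ b ∈ B, ball b.1 (2 * b.2)) ≤ ENNReal.ofReal (∫ x, coverWeight B p x ∂μ) := by
  rw [ofReal_integral_eq_lintegral_ofReal (integrable_coverWeight μ)
    (ae_of_all _ (coverWeight_nonneg hr)), ← lintegral_indicator_one
    (Finset.measurableSet_biUnion B fun b _ => measurableSet_ball)]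
  refine lintegral_mono fun x => ?_
  have h := indicator_le_coverWeight hp hr hr1 x
  by_cases hx : x ∈ ⋃ b ∈ B, ball b.1 (2 * b.2)
  · rw [indicator_of_mem hx] at h ⊢
    exact ENNReal.one_le_ofReal.2 h
  · rw [indicator_of_notMem hx]
    exact bot_le

end Weight

theorem Real.rpow_add_le_mul_rpow_add_rpow {a b p : ℝ} (ha : 0 ≤ a) (hb : 0 ≤ b) (hp : 1 ≤ p) :
    (a + b) ^ p ≤ 2 ^ (p - 1) * (a ^ p + b ^ p) := by
  lift a to ℝ≥0 using ha
  lift b to ℝ≥0 using hb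
  exact_mod_cast NNReal.rpow_add_le_mul_rpow_add_rpow a b hp

section Leibniz

variable {E : Type*} [NormedAddCommGroup E] [NormedSpace ℝ E]

def sobolevGap (f g : E → ℝ) (p : ℝ) (x : E) : ℝ :=
  |g x - f x| ^ p + ‖fderiv ℝ g x - fderiv ℝ f x‖ ^ p

theorem sobolevGap_nonneg (f g : E → ℝ) (p : ℝ) (x : E) : 0 ≤ sobolevGap f g p x := by
  unfold sobolevGap; positivity

theorem norm_fderiv_mul_sub_fderiv_le {f η : E → ℝ} {x : E} (hf : DifferentiableAt ℝ f x)
    (hη : DifferentiableAt ℝ η x) :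
    ‖fderiv ℝ (fun y => f y * η y) x - fderiv ℝ f x‖ ≤
      |f x| * ‖fderiv ℝ η x‖ + |1 - η x| * ‖fderiv ℝ f x‖ := by
  rw [fderiv_fun_mul hf hη]
  calc ‖f x • fderiv ℝ η x + η x • fderiv ℝ f x - fderiv ℝ f x‖
      = ‖f x • fderiv ℝ η x - (1 - η x) • fderiv ℝ f x‖ := by
        congr 1; rw [sub_smul, one_smul]; abel
    _ ≤ ‖f x • fderiv ℝ η x‖ + ‖(1 - η x) • fderiv ℝ f x‖ := norm_sub_le _ _
    _ = |f x| * ‖fderiv ℝ η x‖ + |1 - η x| * ‖fderiv ℝ f x‖ := by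
        rw [norm_smul, norm_smul, Real.norm_eq_abs, Real.norm_eq_abs]

theorem sobolevGap_mul_le {f η : E → ℝ} {x : E} {p C : ℝ} (hp : 1 ≤ p)
    (hf : DifferentiableAt ℝ f x) (hη : DifferentiableAt ℝ η x) (hfC : |f x| ≤ C)
    (hηx : η x ∈ Icc 0 1) :
    sobolevGap f (fun y => f y * η y) p x ≤ C ^ p * (1 - η x) ^ p +
      2 ^ (p - 1) * (C ^ p * ‖fderiv ℝ η x‖ ^ p + (1 - η x) ^ p * ‖fderiv ℝ f x‖ ^ p) := by
  have hC : 0 ≤ C := (abs_nonneg _).trans hfC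
  have h1η : 0 ≤ 1 - η x := by linarith [hηx.2]
  have hval : |f x * η x - f x| ≤ C * (1 - η x) := by
    rw [show f x * η x - f x = -(f x * (1 - η x)) by ring, abs_neg, abs_mul, abs_of_nonneg h1η]
    gcongr
  have hder : ‖fderiv ℝ (fun y => f y * η y) x - fderiv ℝ f x‖ ≤
      C * ‖fderiv ℝ η x‖ + (1 - η x) * ‖fderiv ℝ f x‖ := by
    refine (norm_fderiv_mul_sub_fderiv_le hf hη).trans ?_
    rw [abs_of_nonneg h1η]
    gcongr
  unfold sobolevGap
  gcongr ?_ + ?_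
  · rw [← Real.mul_rpow hC h1η]
    exact Real.rpow_le_rpow (abs_nonneg _) hval (by linarith)
  · calc ‖fderiv ℝ (fun y => f y * η y) x - fderiv ℝ f x‖ ^ p
        ≤ (C * ‖fderiv ℝ η x‖ + (1 - η x) * ‖fderiv ℝ f x‖) ^ p :=
          Real.rpow_le_rpow (norm_nonneg _) hder (by linarith)
      _ ≤ 2 ^ (p - 1) * ((C * ‖fderiv ℝ η x‖) ^ p + ((1 - η x) * ‖fderiv ℝ f x‖) ^ p) :=
          Real.rpow_add_le_mul_rpow_add_rpow (by positivity) (by positivity) hp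
      _ = _ := by rw [Real.mul_rpow hC (norm_nonneg _), Real.mul_rpow h1η (norm_nonneg _)]

end Leibniz

theorem sobolevGap_mul_coverCutoff_le {E : Type*} [NormedAddCommGroup E] [NormedSpace ℝ E]
    {B : Finset (E × ℝ)} {f : E → ℝ} {x : E} {p C : ℝ} (hp : 1 ≤ p) (hfC : |f x| ≤ C)
    (hr : ∀ b ∈ B, 0 < b.2) (hr1 : ∀ b ∈ B, b.2 ≤ 1) (hf : DifferentiableAt ℝ f x)
    (hη : DifferentiableAt ℝ (coverCutoff B) x) :
    sobolevGap f (fun y => f y * coverCutoff B y) p x ≤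
      (1 + 2 ^ (p - 1)) * C ^ p * coverWeight B p x +
        2 ^ (p - 1) * (⋃ b ∈ B, ball b.1 (2 * b.2)).indicator (fun x => ‖fderiv ℝ f x‖ ^ p) x := by
  set U := ⋃ b ∈ B, ball b.1 (2 * b.2)
  have hp0 : 0 < p := by linarith
  have hC : 0 ≤ C := (abs_nonneg _).trans hfC
  have h1 := one_sub_coverCutoff_rpow_le hp0 hr x
  have hgrad : (1 - coverCutoff B x) ^ p * ‖fderiv ℝ f x‖ ^ p ≤
      U.indicator (fun x => ‖fderiv ℝ f x‖ ^ p) x := by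
    calc (1 - coverCutoff B x) ^ p * ‖fderiv ℝ f x‖ ^ p
        ≤ U.indicator 1 x * ‖fderiv ℝ f x‖ ^ p := by gcongr
      _ = U.indicator (fun x => ‖fderiv ℝ f x‖ ^ p) x := by
          by_cases hx : x ∈ U <;> simp [hx]
  calc sobolevGap f (fun y => f y * coverCutoff B y) p x
      ≤ C ^ p * (1 - coverCutoff B x) ^ p + 2 ^ (p - 1) * (C ^ p * ‖fderiv ℝ (coverCutoff B) x‖ ^ p
          + (1 - coverCutoff B x) ^ p * ‖fderiv ℝ f x‖ ^ p) :=
        sobolevGap_mul_le hp hf hη hfC (coverCutoff_mem_Icc x)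
    _ ≤ C ^ p * coverWeight B p x + 2 ^ (p - 1) * (C ^ p * coverWeight B p x +
          U.indicator (fun x => ‖fderiv ℝ f x‖ ^ p) x) := by
        gcongr
        · exact h1.trans (indicator_le_coverWeight hp0.le hr hr1 x)
        · exact norm_fderiv_coverCutoff_rpow_le hp0 hr x
    _ = _ := by ring

section Approximation

variable {E : Type*} [NormedAddCommGroup E] [NormedSpace ℝ E] [FiniteDimensional ℝ E]
  [MeasurableSpace E] [BorelSpace E] {μ : Measure E} [μ.IsAddHaarMeasure]
  {V : Set E} {f : E → ℝ} {p C : ℝ}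

theorem integral_sobolevGap_mul_coverCutoff_le {B : Finset (E × ℝ)}
    (hp : 1 ≤ p) (hV : IsOpen V) (hf : DifferentiableOn ℝ f V) (hfC : ∀ x, |f x| ≤ C)
    (hDf : Integrable (fun x => ‖fderiv ℝ f x‖ ^ p) (μ.restrict V))
    (hr : ∀ b ∈ B, 0 < b.2) (hr1 : ∀ b ∈ B, b.2 ≤ 1) :
    ∫ x in V, sobolevGap f (fun y => f y * coverCutoff B y) p x ∂μ ≤
      (1 + 2 ^ (p - 1)) * C ^ p * ∫ x, coverWeight B p x ∂μ +
        2 ^ (p - 1) * ∫ x in ⋃ b ∈ B, ball b.1 (2 * b.2), ‖fderiv ℝ f x‖ ^ p ∂μ.restrict V := by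
  set η := coverCutoff B
  set U := ⋃ b ∈ B, ball b.1 (2 * b.2)
  have hC : 0 ≤ C := (abs_nonneg _).trans (hfC 0)
  have hU : MeasurableSet U := Finset.measurableSet_biUnion B fun b _ => measurableSet_ball
  have hw := (integrable_coverWeight (B := B) (p := p) μ).restrict (s := V)
  have hDfU := ((integrable_indicator_iff hU).2 hDf.integrableOn).const_mul (2 ^ (p - 1))
  have hbound : ∀ᵐ x ∂μ.restrict V, sobolevGap f (fun y => f y * η y) p x ≤
      (1 + 2 ^ (p - 1)) * C ^ p * coverWeight B p x +
        2 ^ (p - 1) * U.indicator (fun x => ‖fderiv ℝ f x‖ ^ p) x := by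
    filter_upwards [ae_restrict_mem hV.measurableSet,
      ae_restrict_of_ae (lipschitzWith_coverCutoff B).ae_differentiableAt] with x hxV hηx
    exact sobolevGap_mul_coverCutoff_le hp (hfC x) hr hr1
      (hf.differentiableAt (hV.mem_nhds hxV)) hηx
  have hwV : ∫ x in V, coverWeight B p x ∂μ ≤ ∫ x, coverWeight B p x ∂μ :=
    setIntegral_le_integral (integrable_coverWeight μ) (ae_of_all _ (coverWeight_nonneg hr))
  calc ∫ x in V, sobolevGap f (fun y => f y * η y) p x ∂μ
      ≤ ∫ x in V, ((1 + 2 ^ (p - 1)) * C ^ p * coverWeight B p x +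
          2 ^ (p - 1) * U.indicator (fun x => ‖fderiv ℝ f x‖ ^ p) x) ∂μ :=
        integral_mono_of_nonneg (ae_of_all _ (sobolevGap_nonneg _ _ _))
          ((hw.const_mul _).add hDfU) hbound
    _ = (1 + 2 ^ (p - 1)) * C ^ p * ∫ x in V, coverWeight B p x ∂μ +
          2 ^ (p - 1) * ∫ x in U, ‖fderiv ℝ f x‖ ^ p ∂μ.restrict V := by
        rw [integral_add (hw.const_mul _) hDfU, integral_const_mul, integral_const_mul,
          integral_indicator hU]
    _ ≤ _ := by gcongr

theorem tendsto_integral_sobolevGap_mul_coverCutoff {κ : Type*} {l : Filter κ}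
    {B : κ → Finset (E × ℝ)} (hp : 1 ≤ p) (hV : IsOpen V) (hf : DifferentiableOn ℝ f V)
    (hfC : ∀ x, |f x| ≤ C)
    (hDf : MemLp (fun x => fderiv ℝ f x) (ENNReal.ofReal p) (μ.restrict V))
    (hr : ∀ k, ∀ b ∈ B k, 0 < b.2) (hr1 : ∀ k, ∀ b ∈ B k, b.2 ≤ 1)
    (hsum : Tendsto (fun k => ∑ b ∈ B k, b.2 ^ ((finrank ℝ E : ℝ) - p)) l (𝓝 0)) :
    Tendsto (fun k => ∫ x in V, sobolevGap f (fun y => f y * coverCutoff (B k) y) p x ∂μ)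
      l (𝓝 0) := by
  have hp0 : 0 < p := by linarith
  have hDf' : Integrable (fun x => ‖fderiv ℝ f x‖ ^ p) (μ.restrict V) := by
    simpa [ENNReal.toReal_ofReal hp0.le] using
      hDf.integrable_norm_rpow (by simpa using hp0) ENNReal.ofReal_ne_top
  have hweight : Tendsto (fun k => ∫ x, coverWeight (B k) p x ∂μ) l (𝓝 0) := by
    simp_rw [integral_coverWeight μ (hr _)]
    simpa using hsum.const_mul (2 ^ finrank ℝ E * μ.real (ball 0 1))
  have hmeasure :
      Tendsto (fun k => μ.restrict V (⋃ b ∈ B k, ball b.1 (2 * b.2))) l (𝓝 0) := by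
    refine tendsto_of_tendsto_of_tendsto_of_le_of_le tendsto_const_nhds
      (by simpa using ENNReal.tendsto_ofReal hweight) (fun k => bot_le)
      fun k => (Measure.restrict_apply_le _ _).trans
        (measure_iUnion_ball_le_integral_coverWeight μ hp0.le (hr k) (hr1 k))
  refine squeeze_zero (fun k => integral_nonneg (sobolevGap_nonneg _ _ _))
    (fun k => integral_sobolevGap_mul_coverCutoff_le hp hV hf hfC hDf' (hr k) (hr1 k)) ?_
  simpa using (hweight.const_mul ((1 + 2 ^ (p - 1)) * C ^ p)).add
    ((hDf'.tendsto_setIntegral_nhds_zero hmeasure).const_mul (2 ^ (p - 1)))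

end Approximation

end

theorem stmt_14_general (d : ℕ) (p : ℝ) (hp1 : 1 ≤ p) (hpd : p < d)
    (S : Set (EuclideanSpace ℝ (Fin d))) (hScomp : IsCompact S)
    (hS0 : MeasureTheory.Measure.hausdorffMeasure ((d : ℝ) - p) S = 0)
    (f : EuclideanSpace ℝ (Fin d) → ℝ) (C : ℝ) (hfb : ∀ x, |f x| ≤ C)
    (hfdiff : DifferentiableOn ℝ f (ball 0 1))
    (hdfmem : MemLp (fun x => fderiv ℝ f x) (ENNReal.ofReal p)
      (volume.restrict (ball (0 : EuclideanSpace ℝ (Fin d)) 1))) :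
    ∃ (η : ℕ → EuclideanSpace ℝ (Fin d) → ℝ) (ε : ℕ → ℝ),
      (∀ k, ∃ K : NNReal, LipschitzWith K (η k)) ∧
      (∀ k x, η k x ∈ Set.Icc (0 : ℝ) 1) ∧
      (∀ k, ∃ U : Set (EuclideanSpace ℝ (Fin d)), IsOpen U ∧ S ⊆ U ∧ ∀ x ∈ U, η k x = 0) ∧
      (∀ k, 0 < ε k) ∧ Tendsto ε atTop (nhds 0) ∧
      (∀ k, ∀ x ∉ Metric.thickening (2 * ε k) S, η k x = 1) ∧
      Tendsto (fun k => ∫ x in ball (0 : EuclideanSpace ℝ (Fin d)) 1,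
        (|f x * η k x - f x| ^ p +
          ‖fderiv ℝ (fun y => f y * η k y) x - fderiv ℝ f x‖ ^ p))
        atTop (nhds 0) := by
  have hq : 0 < (d : ℝ) - p := sub_pos.2 hpd
  set ε : ℕ → ℝ := fun k => 1 / (k + 1)
  have hε : ∀ k, 0 < ε k := fun k => Nat.one_div_pos_of_nat
  have hε1 : ∀ k, ε k ≤ 1 := fun k => div_le_one_of_le₀ (by simp) (by positivity)
  have hεlim : Tendsto ε atTop (𝓝 0) := tendsto_one_div_add_atTop_nhds_zero_nat
  -- With `δ = ε k ^ (d - p)` the sum bound also forces every radius below `ε k`.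
  choose B hBS hB0 hSB hBsum using fun k =>
    exists_finset_ball_cover_sum_rpow_le hq hScomp hS0 (Real.rpow_pos_of_pos (hε k) ((d : ℝ) - p))
  have hBnonneg : ∀ k, ∀ b ∈ B k, 0 ≤ b.2 ^ ((d : ℝ) - p) := fun k b hb =>
    Real.rpow_nonneg (hB0 k b hb).le _
  have hBε : ∀ k, ∀ b ∈ B k, b.2 ≤ ε k := fun k b hb =>
    (Real.rpow_le_rpow_iff (hB0 k b hb).le (hε k).le hq).1
      ((Finset.single_le_sum (hBnonneg k) hb).trans (hBsum k))
  refine ⟨fun k => coverCutoff (B k), ε, fun k => ⟨_, lipschitzWith_coverCutoff (B k)⟩,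
    fun k => coverCutoff_mem_Icc, fun k => ⟨_, isOpen_biUnion fun b _ => isOpen_ball, hSB k,
      fun x hx => ?_⟩, hε, hεlim, fun k x hx => ?_, ?_⟩
  · obtain ⟨b, hb, hxb⟩ := mem_iUnion₂.1 hx
    exact coverCutoff_eq_zero hb (hB0 k b hb) (mem_ball.1 hxb).le
  · refine coverCutoff_eq_one (hB0 k) fun hxB => hx ?_
    obtain ⟨b, hb, hxb⟩ := mem_iUnion₂.1 hxB
    exact mem_thickening_iff.2
      ⟨b.1, hBS k b hb, (mem_ball.1 hxb).trans_le (by linarith [hBε k b hb])⟩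
  · refine tendsto_integral_sobolevGap_mul_coverCutoff hp1 isOpen_ball hfdiff hfb hdfmem hB0
      (fun k b hb => (hBε k b hb).trans (hε1 k)) ?_
    rw [finrank_euclideanSpace_fin]
    refine squeeze_zero (fun k => Finset.sum_nonneg (hBnonneg k)) hBsum ?_
    simpa [Real.zero_rpow hq.ne'] using hεlim.rpow_const (Or.inr hq.le)

/-- Removability of sets of vanishing `(d-p)`-Hausdorff measure for `W^{1,p} ∩ L^∞`
approximation: if `S ⊆ B̄₁` is compact with `H^{d-p}(S) = 0`, `1 ≤ p < d`, and `f` is a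
bounded `W^{1,p}` function on `B₁`, then there are `[0,1]`-valued Lipschitz cutoffs `η_k`
vanishing near `S`, equal to `1` outside a `2ε_k`-neighborhood of `S` with `ε_k → 0`, such
that `f η_k → f` in `W^{1,p}(B₁)`. -/
theorem stmt_14 (d : ℕ) (hd : 2 ≤ d) (p : ℝ) (hp1 : 1 ≤ p) (hpd : p < d)
    (S : Set (EuclideanSpace ℝ (Fin d))) (hScomp : IsCompact S)
    (hSsub : S ⊆ closedBall 0 1)
    (hS0 : MeasureTheory.Measure.hausdorffMeasure ((d : ℝ) - p) S = 0)
    (f : EuclideanSpace ℝ (Fin d) → ℝ) (C : ℝ) (hfb : ∀ x, |f x| ≤ C)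
    (hfdiff : DifferentiableOn ℝ f (ball 0 1))
    (hfmem : MemLp f (ENNReal.ofReal p)
      (volume.restrict (ball (0 : EuclideanSpace ℝ (Fin d)) 1)))
    (hdfmem : MemLp (fun x => fderiv ℝ f x) (ENNReal.ofReal p)
      (volume.restrict (ball (0 : EuclideanSpace ℝ (Fin d)) 1))) :
    ∃ (η : ℕ → EuclideanSpace ℝ (Fin d) → ℝ) (ε : ℕ → ℝ),
      (∀ k, ∃ K : NNReal, LipschitzWith K (η k)) ∧
      (∀ k x, η k x ∈ Set.Icc (0 : ℝ) 1) ∧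
      (∀ k, ∃ U : Set (EuclideanSpace ℝ (Fin d)), IsOpen U ∧ S ⊆ U ∧ ∀ x ∈ U, η k x = 0) ∧
      (∀ k, 0 < ε k) ∧ Tendsto ε atTop (nhds 0) ∧
      (∀ k, ∀ x ∉ Metric.thickening (2 * ε k) S, η k x = 1) ∧
      Tendsto (fun k => ∫ x in ball (0 : EuclideanSpace ℝ (Fin d)) 1,
        (|f x * η k x - f x| ^ p +
          ‖fderiv ℝ (fun y => f y * η k y) x - fderiv ℝ f x‖ ^ p))
        atTop (nhds 0) :=
  stmt_14_general d p hp1 hpd S hScomp hS0 f C hfb hfdiff hdfmem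
end
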